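/- Let u : [0, T) × M → (0, ∞) be a C² solution of ∂_t(u^N) = ((n+2)/4)(c_n Δu − R₀ u + f u^N) on a compact Riemannian manifold (M, g₀), with N = (n+2)/(n-2), R₀ < 0 and f smooth. Then u(t,x) ≤ max(1, max_M u(0,·)) e^{C₁ t} for all (t,x), where C₁ = ((n-2)/4)(max_M |R₀| + max_M |f|). -/

import Mathlib

open Real Set Filter Topology

noncomputable def lap {n : ℕ} (φ : EuclideanSpace ℝ (Fin n) → ℝ)
    (x : EuclideanSpace ℝ (Fin n)) : ℝ :=
  ∑ i : Fin n, fderiv ℝ (fun y => fderiv ℝ φ y (EuclideanSpace.single i 1)) x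
    (EuclideanSpace.single i 1)

def IsPeriodic {n : ℕ} (φ : EuclideanSpace ℝ (Fin n) → ℝ) : Prop :=
  ∀ x i, φ (x + EuclideanSpace.single i 1) = φ x

def cube (n : ℕ) : Set (EuclideanSpace ℝ (Fin n)) := {y | ∀ i, y i ∈ Icc (0:ℝ) 1}

lemma isCompact_cube (n : ℕ) : IsCompact (cube n) := by
  have h : cube n = (⇑(EuclideanSpace.equiv (Fin n) ℝ)) ⁻¹' (Set.univ.pi fun _ => Icc (0:ℝ) 1) := by
    ext y
    simp only [cube, mem_setOf_eq, mem_preimage, Set.mem_pi, mem_univ, forall_true_left]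
    rfl
  rw [h, ← (EuclideanSpace.equiv (Fin n) ℝ).image_symm_eq_preimage]
  exact (isCompact_univ_pi fun _ => isCompact_Icc).image
    (EuclideanSpace.equiv (Fin n) ℝ).symm.continuous

lemma per_zsmul {n : ℕ} {φ : EuclideanSpace ℝ (Fin n) → ℝ} (hφ : IsPeriodic φ)
    (x : EuclideanSpace ℝ (Fin n)) (i : Fin n) (k : ℤ) :
    φ (x + (k:ℝ) • EuclideanSpace.single i 1) = φ x := by
  induction k using Int.induction_on with
  | zero => simp
  | succ k ih =>
      push_cast at ih ⊢
      rw [add_smul, one_smul, ← add_assoc]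
      exact (hφ _ i).trans ih
  | pred k ih =>
      push_cast at ih ⊢
      have hz : x + (-(k:ℝ)-1) • EuclideanSpace.single i 1 + EuclideanSpace.single i 1
          = x + (-(k:ℝ)) • EuclideanSpace.single i 1 := by
        rw [sub_smul, one_smul]; abel
      calc φ (x + (-(k:ℝ)-1) • EuclideanSpace.single i 1)
          = φ (x + (-(k:ℝ)-1) • EuclideanSpace.single i 1 + EuclideanSpace.single i 1) :=
            (hφ _ i).symm
        _ = φ (x + (-(k:ℝ)) • EuclideanSpace.single i 1) := by rw [hz]
        _ = φ x := ih

lemma per_sum {n : ℕ} {φ : EuclideanSpace ℝ (Fin n) → ℝ} (hφ : IsPeriodic φ)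
    (c : Fin n → ℤ) (s : Finset (Fin n)) (x : EuclideanSpace ℝ (Fin n)) :
    φ (x + ∑ i ∈ s, ((c i : ℝ)) • EuclideanSpace.single i 1) = φ x := by
  induction s using Finset.induction_on generalizing x with
  | empty => simp
  | insert j s' hj ih =>
      rw [Finset.sum_insert hj, ← add_assoc]
      rw [ih (x + (c j : ℝ) • EuclideanSpace.single j 1), per_zsmul hφ]

lemma per_reduce {n : ℕ} {φ : EuclideanSpace ℝ (Fin n) → ℝ} (hφ : IsPeriodic φ)
    (x : EuclideanSpace ℝ (Fin n)) : ∃ y ∈ cube n, φ y = φ x := by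
  set y : EuclideanSpace ℝ (Fin n) :=
    x - ∑ i, ((⌊x i⌋ : ℝ)) • EuclideanSpace.single i 1 with hy
  have hxy : x = y + ∑ i, ((⌊x i⌋ : ℝ)) • EuclideanSpace.single i 1 := by
    rw [hy]; abel
  refine ⟨y, ?_, ?_⟩
  · intro i
    have hsum : (∑ j, ((⌊x j⌋ : ℝ)) • EuclideanSpace.single j (1:ℝ)) i = (⌊x i⌋ : ℝ) := by
      have := map_sum (EuclideanSpace.proj (𝕜 := ℝ) i)
        (fun j => ((⌊x j⌋ : ℝ)) • EuclideanSpace.single j (1:ℝ)) Finset.univ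
      have hproj : ∀ z : EuclideanSpace ℝ (Fin n), EuclideanSpace.proj (𝕜 := ℝ) i z = z i :=
        fun _ => rfl
      rw [show (∑ j, ((⌊x j⌋ : ℝ)) • EuclideanSpace.single j (1:ℝ)) i
        = EuclideanSpace.proj (𝕜 := ℝ) i (∑ j, ((⌊x j⌋ : ℝ)) • EuclideanSpace.single j (1:ℝ))
        from rfl, this]
      simp [hproj, PiLp.smul_apply, EuclideanSpace.single_apply]
    have hyi : y i = Int.fract (x i) := by
      rw [hy, PiLp.sub_apply, hsum]
      rfl
    rw [hyi]
    exact ⟨Int.fract_nonneg _, (Int.fract_lt_one _).le⟩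
  · conv_rhs => rw [hxy]
    exact (per_sum hφ _ Finset.univ y).symm

lemma range_eq_image_cube {n : ℕ} {φ : EuclideanSpace ℝ (Fin n) → ℝ} (hφ : IsPeriodic φ) :
    Set.range φ = φ '' cube n := by
  apply Subset.antisymm
  · rintro _ ⟨x, rfl⟩
    obtain ⟨y, hy, hyx⟩ := per_reduce hφ x
    exact ⟨y, hy, hyx⟩
  · rintro _ ⟨y, _, rfl⟩; exact mem_range_self y

lemma per_bddAbove {n : ℕ} {φ : EuclideanSpace ℝ (Fin n) → ℝ} (hφ : IsPeriodic φ)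
    (hc : Continuous φ) : BddAbove (Set.range φ) := by
  rw [range_eq_image_cube hφ]
  exact ((isCompact_cube n).image hc).bddAbove

/-- 1D second derivative test at a global maximum at 0. -/
lemma second_deriv_test {g g' : ℝ → ℝ} {L : ℝ}
    (hg : ∀ s, HasDerivAt g (g' s) s) (hg' : HasDerivAt g' L 0)
    (hmax : ∀ s, g s ≤ g 0) : L ≤ 0 := by
  by_contra hL
  push_neg at hL
  have h0 : g' 0 = 0 := by
    have hlm : IsLocalMax g 0 := Filter.Eventually.of_forall hmax
    have := hlm.deriv_eq_zero
    rwa [(hg 0).deriv] at this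
  have hfreq : ∃ᶠ t in 𝓝[>] (0:ℝ), g' t ≤ 0 := by
    rw [Filter.frequently_iff]
    intro U hU
    obtain ⟨b, hb, hsub⟩ := mem_nhdsGT_iff_exists_Ioo_subset.mp hU
    have hb0 : (0:ℝ) < b := hb
    obtain ⟨ξ, hξ, hval⟩ := exists_hasDerivAt_eq_slope g g' hb0
      (fun t _ => (hg t).continuousAt.continuousWithinAt) (fun x _ => hg x)
    refine ⟨ξ, hsub hξ, ?_⟩
    rw [hval]
    apply div_nonpos_of_nonpos_of_nonneg (by linarith [hmax b]) (by linarith)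
  have hslope : Tendsto (slope g' 0) (𝓝[>] (0:ℝ)) (𝓝 L) :=
    (hasDerivAt_iff_tendsto_slope.mp hg').mono_left
      (nhdsWithin_mono _ (fun t ht => ne_of_gt ht))
  have hev : ∀ᶠ t in 𝓝[>] (0:ℝ), 0 < slope g' 0 t :=
    hslope.eventually (eventually_gt_nhds hL)
  have hpos : ∀ᶠ t in 𝓝[>] (0:ℝ), 0 < t := self_mem_nhdsWithin
  obtain ⟨t, h1, h2, h3⟩ := (hfreq.and_eventually (hev.and hpos)).exists
  rw [slope_def_field, h0, sub_zero, sub_zero, div_eq_inv_mul] at h2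
  nlinarith [inv_pos.mpr h3]

lemma dir_second_deriv_nonpos {E : Type*} [NormedAddCommGroup E] [NormedSpace ℝ E]
    {φ : E → ℝ} (hφ : ContDiff ℝ 2 φ) {x : E} (hmax : ∀ y, φ y ≤ φ x) (v : E) :
    fderiv ℝ (fun y => fderiv ℝ φ y v) x v ≤ 0 := by
  set ψ : E → ℝ := fun y => fderiv ℝ φ y v with hψdef
  have hψ : ContDiff ℝ 1 ψ :=
    (hφ.fderiv_right (by norm_num)).clm_apply contDiff_const
  have hline : ∀ s : ℝ, HasDerivAt (fun s : ℝ => x + s • v) v s := by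
    intro s
    simpa using ((hasDerivAt_id s).smul_const v).const_add x
  have hg : ∀ s : ℝ, HasDerivAt (fun s : ℝ => φ (x + s • v)) (ψ (x + s • v)) s := by
    intro s
    exact ((hφ.differentiable (by norm_num)).differentiableAt.hasFDerivAt).comp_hasDerivAt s
      (hline s)
  have hg' : HasDerivAt (fun s : ℝ => ψ (x + s • v)) (fderiv ℝ ψ x v) 0 := by
    have h := ((hψ.differentiable one_ne_zero).differentiableAt.hasFDerivAt
      (x := x + (0:ℝ) • v)).comp_hasDerivAt 0 (hline 0)
    rw [zero_smul, add_zero] at h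
    exact h
  have := second_deriv_test hg hg' (fun s => by simpa using hmax (x + s • v))
  exact this


lemma lap_nonpos_at_max {n : ℕ} {φ : EuclideanSpace ℝ (Fin n) → ℝ}
    (hφ : ContDiff ℝ 2 φ) {x : EuclideanSpace ℝ (Fin n)}
    (hmax : ∀ y, φ y ≤ φ x) : lap φ x ≤ 0 :=
  Finset.sum_nonpos fun i _ => dir_second_deriv_nonpos hφ hmax _

set_option maxHeartbeats 2000000 in
/-- Upper bound of Proposition 2.1: for a positive solution `u` of
`∂ₜ(u^N) = ((n+2)/4)(cₙΔu − R₀u + f u^N)` with `R₀ < 0`,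
`u(t,x) ≤ max(1, max u(0,·)) e^{C₁ t}` with `C₁ = ((n-2)/4)(max|R₀| + max|f|)`. -/
theorem stmt_7 {n : ℕ} (hn : 3 ≤ n) (T : ℝ) (hT : 0 < T)
    (u : ℝ → EuclideanSpace ℝ (Fin n) → ℝ)
    (R₀ f : EuclideanSpace ℝ (Fin n) → ℝ)
    (N cn : ℝ) (hN : N = ((n : ℝ) + 2) / ((n : ℝ) - 2))
    (hcn : cn = 4 * ((n : ℝ) - 1) / ((n : ℝ) - 2))
    (hR₀smooth : ContDiff ℝ (⊤ : ℕ∞) R₀) (hfsmooth : ContDiff ℝ (⊤ : ℕ∞) f)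
    (hR₀per : IsPeriodic R₀) (hfper : IsPeriodic f)
    (hR₀neg : ∀ x, R₀ x < 0)
    (hupos : ∀ t ∈ Ico 0 T, ∀ x, 0 < u t x)
    (huper : ∀ t ∈ Ico 0 T, IsPeriodic (u t))
    (hu2 : ∀ t ∈ Ico 0 T, ContDiff ℝ 2 (u t))
    (hucont : ContinuousOn (fun q : ℝ × EuclideanSpace ℝ (Fin n) => u q.1 q.2)
      (Ico 0 T ×ˢ univ))
    (hflow : ∀ t ∈ Ico 0 T, ∀ x,
      HasDerivAt (fun s => u s x ^ N)
        (((n : ℝ) + 2) / 4 * (cn * lap (u t) x - R₀ x * u t x + f x * u t x ^ N)) t) :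
    ∀ t ∈ Ico 0 T, ∀ x,
      u t x ≤ max 1 (sSup (Set.range (u 0))) *
        Real.exp ((((n : ℝ) - 2) / 4 *
          (sSup (Set.range fun y => |R₀ y|) + sSup (Set.range fun y => |f y|))) * t) := by
  intro t₀ ht₀ x₀
  set SR := sSup (Set.range fun y => |R₀ y|) with hSRdef
  set Sf := sSup (Set.range fun y => |f y|) with hSfdef
  set A := max 1 (sSup (Set.range (u 0))) with hAdef
  set C₁ := ((n : ℝ) - 2) / 4 * (SR + Sf) with hC₁def
  -- basic numeric facts
  have hn3 : (3:ℝ) ≤ (n:ℝ) := by exact_mod_cast hn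
  have hn2 : (0:ℝ) < (n:ℝ) - 2 := by linarith
  have hNpos : 0 < N := by rw [hN]; positivity
  have hN1 : 1 ≤ N := by
    rw [hN, le_div_iff₀ hn2]; linarith
  -- sup bounds
  have habsRper : IsPeriodic (fun y => |R₀ y|) := fun x i => by simp [hR₀per x i]
  have habsfper : IsPeriodic (fun y => |f y|) := fun x i => by simp [hfper x i]
  have hbR : BddAbove (Set.range fun y => |R₀ y|) :=
    per_bddAbove habsRper hR₀smooth.continuous.abs
  have hbf : BddAbove (Set.range fun y => |f y|) :=
    per_bddAbove habsfper hfsmooth.continuous.abs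
  have hSR : ∀ x, |R₀ x| ≤ SR := fun x => le_csSup hbR (mem_range_self x)
  have hSf : ∀ x, |f x| ≤ Sf := fun x => le_csSup hbf (mem_range_self x)
  have hSR0 : 0 ≤ SR := le_trans (abs_nonneg _) (hSR 0)
  have hSf0 : 0 ≤ Sf := le_trans (abs_nonneg _) (hSf 0)
  have hC₁0 : 0 ≤ C₁ := by
    rw [hC₁def]
    exact mul_nonneg (by linarith) (by linarith)
  have h0T : (0:ℝ) ∈ Ico 0 T := ⟨le_rfl, hT⟩
  have hA : ∀ x, u 0 x ≤ A := by
    intro x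
    refine le_trans (le_csSup (per_bddAbove (huper 0 h0T) (hu2 0 h0T).continuous)
      (mem_range_self x)) (le_max_right _ _)
  have hA1 : (1:ℝ) ≤ A := le_max_left _ _
  have hNC₁ : N * C₁ = ((n:ℝ) + 2) / 4 * (SR + Sf) := by
    rw [hN, hC₁def]; field_simp
  -- main reduction to ε > 0
  suffices h : ∀ ε > 0, u t₀ x₀ ≤ A * Real.exp ((C₁ + ε) * t₀) by
    have hlim : Tendsto (fun ε : ℝ => A * Real.exp ((C₁ + ε) * t₀)) (𝓝[>] 0)
        (𝓝 (A * Real.exp (C₁ * t₀))) := by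
      have hc : Continuous fun ε : ℝ => A * Real.exp ((C₁ + ε) * t₀) := by continuity
      have := hc.tendsto 0
      simp only [add_zero] at this
      exact this.mono_left nhdsWithin_le_nhds
    refine ge_of_tendsto hlim ?_
    filter_upwards [self_mem_nhdsWithin] with ε hε
    exact h ε hε
  intro ε hε
  by_contra hcon
  push_neg at hcon
  set c := C₁ + ε with hcdef
  have hc0 : 0 < c := by rw [hcdef]; linarith
  -- the compact set and the maximum of F
  set F : ℝ × EuclideanSpace ℝ (Fin n) → ℝ := fun q => u q.1 q.2 * Real.exp (-(c * q.1))
    with hFdef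
  set K : Set (ℝ × EuclideanSpace ℝ (Fin n)) := Icc 0 t₀ ×ˢ cube n with hKdef
  have hKcpt : IsCompact K := isCompact_Icc.prod (isCompact_cube n)
  have hcube0 : (0 : EuclideanSpace ℝ (Fin n)) ∈ cube n := by
    intro i; constructor <;> simp
  have hKne : K.Nonempty := ⟨(0, 0), ⟨⟨le_rfl, ht₀.1⟩, hcube0⟩⟩
  have hKsub : K ⊆ Ico 0 T ×ˢ univ := by
    rintro ⟨t, x⟩ ⟨ht, _⟩
    exact ⟨⟨ht.1, lt_of_le_of_lt ht.2 ht₀.2⟩, mem_univ x⟩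
  have hFcont : ContinuousOn F K := by
    apply ContinuousOn.mul (hucont.mono hKsub)
    exact (Real.continuous_exp.comp (continuous_const.mul continuous_fst : Continuous fun q : ℝ × EuclideanSpace ℝ (Fin n) => c * q.1).neg).continuousOn
  obtain ⟨⟨t₁, x₁⟩, hmemK, hmax⟩ := hKcpt.exists_isMaxOn hKne hFcont
  have ht₁memI := hmemK.1
  have hx₁cube := hmemK.2
  have ht₁T : t₁ ∈ Ico 0 T := (hKsub hmemK).1
  set m := u t₁ x₁ * Real.exp (-(c * t₁)) with hmdef
  -- m > A
  have hmA : A < m := by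
    obtain ⟨y, hyc, hyx⟩ := per_reduce (huper t₀ ht₀) x₀
    have hmem : ((t₀, y) : ℝ × EuclideanSpace ℝ (Fin n)) ∈ K :=
      ⟨⟨ht₀.1, le_rfl⟩, hyc⟩
    have h1 : u t₀ x₀ * Real.exp (-(c * t₀)) ≤ m := by
      have := hmax hmem
      simpa [hFdef, hyx] using this
    have h2 : A < u t₀ x₀ * Real.exp (-(c * t₀)) := by
      have := mul_lt_mul_of_pos_right hcon (Real.exp_pos (-(c * t₀)))
      rwa [mul_assoc, ← Real.exp_add, add_neg_cancel, Real.exp_zero, mul_one] at this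
    linarith
  have hm1 : (1:ℝ) < m := lt_of_le_of_lt hA1 hmA
  -- t₁ > 0
  have ht₁pos : 0 < t₁ := by
    rcases lt_or_eq_of_le ht₁memI.1 with h | h
    · exact h
    · exfalso
      have h0 : t₁ = 0 := h.symm
      have hm0 : m = u 0 x₁ := by rw [hmdef, h0]; simp
      have hA' := hA x₁
      rw [← hm0] at hA'
      linarith
  -- spatial global max
  have huteq : u t₁ x₁ = m * Real.exp (c * t₁) := by
    rw [hmdef, mul_assoc, ← Real.exp_add, neg_add_cancel, Real.exp_zero, mul_one]
  have hspace : ∀ x, u t₁ x ≤ u t₁ x₁ := by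
    intro x
    obtain ⟨y, hyc, hyx⟩ := per_reduce (huper t₁ ht₁T) x
    have hmem : ((t₁, y) : ℝ × EuclideanSpace ℝ (Fin n)) ∈ K := ⟨ht₁memI, hyc⟩
    have h1 : u t₁ y * Real.exp (-(c * t₁)) ≤ m := hmax hmem
    rw [← hyx]
    exact (mul_le_mul_iff_of_pos_right (Real.exp_pos (-(c * t₁)))).mp h1
  have hlap : lap (u t₁) x₁ ≤ 0 := lap_nonpos_at_max (hu2 t₁ ht₁T) hspace
  -- time bound on the segment
  have htime : ∀ t ∈ Icc 0 t₁, u t x₁ ≤ m * Real.exp (c * t) := by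
    intro t ht
    have hmem : ((t, x₁) : ℝ × EuclideanSpace ℝ (Fin n)) ∈ K :=
      ⟨⟨ht.1, le_trans ht.2 ht₁memI.2⟩, hx₁cube⟩
    have h1 : u t x₁ * Real.exp (-(c * t)) ≤ m := hmax hmem
    calc u t x₁ = (u t x₁ * Real.exp (-(c * t))) * Real.exp (c * t) := by
          rw [mul_assoc, ← Real.exp_add]; simp
      _ ≤ m * Real.exp (c * t) := mul_le_mul_of_nonneg_right h1 (Real.exp_pos _).le
  -- derivative facts
  set D : ℝ := ((n : ℝ) + 2) / 4 *
    (cn * lap (u t₁) x₁ - R₀ x₁ * u t₁ x₁ + f x₁ * u t₁ x₁ ^ N) with hDdef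
  have hPd : HasDerivAt (fun s => u s x₁ ^ N) D t₁ := hflow t₁ ht₁T x₁
  have hEd : HasDerivAt (fun t : ℝ => m ^ N * Real.exp (N * c * t))
      (m ^ N * (N * c) * Real.exp (N * c * t₁)) t₁ := by
    have h1 : HasDerivAt (fun t : ℝ => N * c * t) (N * c) t₁ := by
      simpa using (hasDerivAt_id t₁).const_mul (N * c)
    have h2 := h1.exp
    have h3 := h2.const_mul (m ^ N)
    rw [show m ^ N * (N * c) * Real.exp (N * c * t₁) = m ^ N * (Real.exp (N * c * t₁) * (N * c)) by ring]
    exact h3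
  set Q : ℝ → ℝ := fun t => u t x₁ ^ N - m ^ N * Real.exp (N * c * t) with hQdef
  have hQd : HasDerivAt Q (D - m ^ N * (N * c) * Real.exp (N * c * t₁)) t₁ := hPd.sub hEd
  have hmpos : (0:ℝ) < m := lt_trans one_pos hm1
  have hrpow_me : ∀ t : ℝ, (m * Real.exp (c * t)) ^ N = m ^ N * Real.exp (N * c * t) := by
    intro t
    rw [Real.mul_rpow hmpos.le (Real.exp_pos _).le, ← Real.exp_mul]
    ring_nf
  have hQnonpos : ∀ t ∈ Icc 0 t₁, Q t ≤ 0 := by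
    intro t ht
    have htT : t ∈ Ico 0 T := ⟨ht.1, lt_of_le_of_lt (le_trans ht.2 ht₁memI.2) ht₀.2⟩
    have h1 : u t x₁ ^ N ≤ (m * Real.exp (c * t)) ^ N :=
      Real.rpow_le_rpow (hupos t htT x₁).le (htime t ht) hNpos.le
    rw [hrpow_me t] at h1
    show u t x₁ ^ N - m ^ N * Real.exp (N * c * t) ≤ 0
    linarith
  have hQt₁ : Q t₁ = 0 := by
    show u t₁ x₁ ^ N - m ^ N * Real.exp (N * c * t₁) = 0
    rw [huteq, hrpow_me t₁]
    ring
  -- left derivative nonneg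
  have hQ'nonneg : 0 ≤ D - m ^ N * (N * c) * Real.exp (N * c * t₁) := by
    have hslope : Tendsto (slope Q t₁) (𝓝[<] t₁)
        (𝓝 (D - m ^ N * (N * c) * Real.exp (N * c * t₁))) :=
      (hasDerivAt_iff_tendsto_slope.mp hQd).mono_left
        (nhdsWithin_mono _ fun t ht => ne_of_lt ht)
    refine ge_of_tendsto hslope ?_
    filter_upwards [Ioo_mem_nhdsLT_of_mem (⟨ht₁pos, le_rfl⟩ : t₁ ∈ Ioc 0 t₁)] with t ht
    rw [slope_def_field, hQt₁, sub_zero]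
    have hQt : Q t ≤ 0 := hQnonpos t ⟨ht.1.le, ht.2.le⟩
    exact div_nonneg_of_nonpos hQt (by linarith [ht.2])
  -- upper bound on D
  set U := u t₁ x₁ with hUdef
  have hU1 : (1:ℝ) ≤ U := by
    rw [huteq]
    have he1 : (1:ℝ) ≤ Real.exp (c * t₁) := Real.one_le_exp (mul_nonneg hc0.le ht₁pos.le)
    calc (1:ℝ) ≤ m := hm1.le
      _ = m * 1 := (mul_one m).symm
      _ ≤ m * Real.exp (c * t₁) := mul_le_mul_of_nonneg_left he1 hmpos.le
  have hUpos : (0:ℝ) < U := lt_of_lt_of_le one_pos hU1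
  have hUNeq : U ^ N = m ^ N * Real.exp (N * c * t₁) := by rw [huteq, hrpow_me]
  have hUUN : U ≤ U ^ N := by
    calc U = U ^ (1:ℝ) := (Real.rpow_one U).symm
    _ ≤ U ^ N := Real.rpow_le_rpow_of_exponent_le hU1 hN1
  have hUNpos : (0:ℝ) < U ^ N := Real.rpow_pos_of_pos hUpos N
  have hcnpos : (0:ℝ) < cn := by rw [hcn]; exact div_pos (by linarith) hn2
  have hDb : D ≤ N * C₁ * U ^ N := by
    rw [hNC₁, hDdef]
    have h1 : cn * lap (u t₁) x₁ ≤ 0 := mul_nonpos_of_nonneg_of_nonpos hcnpos.le hlap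
    have h2 : -R₀ x₁ * U ≤ SR * U := by
      have : -R₀ x₁ ≤ SR := le_trans (neg_le_abs _) (hSR x₁)
      exact mul_le_mul_of_nonneg_right this hUpos.le
    have h2' : SR * U ≤ SR * U ^ N := mul_le_mul_of_nonneg_left hUUN hSR0
    have h3 : f x₁ * U ^ N ≤ Sf * U ^ N := by
      have : f x₁ ≤ Sf := le_trans (le_abs_self _) (hSf x₁)
      exact mul_le_mul_of_nonneg_right this hUNpos.le
    have hn4 : (0:ℝ) < ((n:ℝ) + 2) / 4 := by positivity
    have : cn * lap (u t₁) x₁ - R₀ x₁ * U + f x₁ * U ^ N ≤ (SR + Sf) * U ^ N := by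
      have hrw : -R₀ x₁ * U = -(R₀ x₁ * U) := by ring
      rw [hrw] at h2
      nlinarith [h1, h2, h2', h3]
    calc ((n : ℝ) + 2) / 4 * (cn * lap (u t₁) x₁ - R₀ x₁ * U + f x₁ * U ^ N)
        ≤ ((n : ℝ) + 2) / 4 * ((SR + Sf) * U ^ N) := by
          exact mul_le_mul_of_nonneg_left this hn4.le
      _ = ((n : ℝ) + 2) / 4 * (SR + Sf) * U ^ N := by ring
  -- contradiction
  have hEq : m ^ N * (N * c) * Real.exp (N * c * t₁) = N * c * U ^ N := by
    rw [hUNeq]; ring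
  have hkey : N * c * U ^ N ≤ N * C₁ * U ^ N := by
    rw [← hEq]
    linarith [hQ'nonneg, hDb, hEq]
  have : c ≤ C₁ := by
    have h := le_of_mul_le_mul_right (by linarith [hkey] :
      (N * c) * U ^ N ≤ (N * C₁) * U ^ N) hUNpos
    exact le_of_mul_le_mul_left (by linarith) hNpos
  rw [hcdef] at this
  linarith
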